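/- Let n ≥ 3, 2−n < b < 2, b−2 < c ≤ 0, ω > 0, and p > 0 with 2(2−b) < p_c ≤ (2−b)(p+2) where p_c := np − 2c. Let (α,β) ∈ ℝ² satisfy α > 0, β > 0 and 2α − nβ ≥ 0. Let V : ℝⁿ → ℝ be twice differentiable with V ≥ 0, −(2−b)V(x) ≤ x·∇V(x) ≤ 0, and x·(∇²V(x))·xᵀ ≤ −(n + 3 − b − 2α/β)·x·∇V(x) for all x, where ∇²V is the Hessian of V. Set m^{α,β}_{ω,0} := inf{S_{ω,0}(ψ) : ψ ∈ W_b^{1,2}, ψ ≠ 0, K^{α,β}_{ω,0}(ψ) = 0}. Then every φ ∈ W_b^{1,2} with S_{ω,V}(φ) < m^{α,β}_{ω,0} and K^{α,β}_{ω,V}(φ) < 0 satisfies K^{α,β}_{ω,V}(φ) ≤ −[2α + (2−b−n)β]·(m^{α,β}_{ω,0} − S_{ω,V}(φ)). -/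

import Mathlib

open MeasureTheory Real Filter

abbrev ESp (n : ℕ) := EuclideanSpace ℝ (Fin n)

noncomputable def wInt (n : ℕ) (a q : ℝ) (f : ESp n → ℂ) : ℝ :=
  ∫ x : ESp n, ‖x‖ ^ a * ‖f x‖ ^ q

noncomputable def gradInt (n : ℕ) (b : ℝ) (f : ESp n → ℂ) : ℝ :=
  ∫ x : ESp n, ‖x‖ ^ b * ‖fderiv ℝ f x‖ ^ 2

/-- Membership in the weighted Sobolev space `W_b^{1,2}`. -/
def memW (n : ℕ) (b : ℝ) (f : ESp n → ℂ) : Prop :=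
  Differentiable ℝ f ∧
  Integrable (fun x : ESp n => ‖f x‖ ^ (2:ℝ)) ∧
  Integrable (fun x : ESp n => ‖x‖ ^ b * ‖fderiv ℝ f x‖ ^ 2)

/-- Radial symmetry. -/
def IsRadial (n : ℕ) (f : ESp n → ℂ) : Prop :=
  ∀ x y : ESp n, ‖x‖ = ‖y‖ → f x = f y

noncomputable def Vterm (n : ℕ) (V : ESp n → ℝ) (φ : ESp n → ℂ) : ℝ :=
  ∫ x : ESp n, V x * ‖φ x‖ ^ 2

noncomputable def VdV (n : ℕ) (V : ESp n → ℝ) (φ : ESp n → ℂ) : ℝ :=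
  ∫ x : ESp n, (fderiv ℝ V x x) * ‖φ x‖ ^ 2

noncomputable def Sfun (n : ℕ) (b c p ω : ℝ) (V : ESp n → ℝ) (φ : ESp n → ℂ) : ℝ :=
  (1/2) * gradInt n b φ + (1/2) * Vterm n V φ + (ω/2) * wInt n 0 2 φ
    - (1/(p+2)) * wInt n c (p+2) φ

noncomputable def Kfun (n : ℕ) (b c p ω α β : ℝ) (V : ESp n → ℝ) (φ : ESp n → ℂ) : ℝ :=
  ((2*α + (2-b-(n:ℝ))*β)/2) * gradInt n b φ
  + ((2*α - (n:ℝ)*β)/2) * (Vterm n V φ + ω * wInt n 0 2 φ)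
  - (β/2) * VdV n V φ
  - ((α*(p+2) - ((n:ℝ)+c)*β)/(p+2)) * wInt n c (p+2) φ

noncomputable def Ebv (n : ℕ) (b c p : ℝ) (V : ESp n → ℝ) (u : ESp n → ℂ) : ℝ :=
  (1/2) * gradInt n b u + (1/2) * Vterm n V u - (1/(p+2)) * wInt n c (p+2) u

noncomputable def Pfun (n : ℕ) (b c p : ℝ) (V : ESp n → ℝ) (u : ESp n → ℂ) : ℝ :=
  gradInt n b u - (1/(2-b)) * VdV n V u
    - (((n:ℝ)*p - 2*c)/((2-b)*(p+2))) * wInt n c (p+2) u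

/-- Weak solution of `∇·(|x|^b ∇Q) − ωQ + |x|^c |Q|^p Q = 0`. -/
def IsWeakSol (n : ℕ) (b c p ω : ℝ) (Q : ESp n → ℂ) : Prop :=
  ∀ ψ : ESp n → ℂ, ContDiff ℝ (⊤ : ℕ∞) ψ → HasCompactSupport ψ →
    (∫ x : ESp n, ((‖x‖ ^ b : ℝ) : ℂ) *
        ∑ i : Fin n, fderiv ℝ Q x (EuclideanSpace.single i 1) *
          starRingEnd ℂ (fderiv ℝ ψ x (EuclideanSpace.single i 1)))
      + (ω : ℂ) * ∫ x : ESp n, Q x * starRingEnd ℂ (ψ x)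
      = ∫ x : ESp n, ((‖x‖ ^ c : ℝ) : ℂ) * ((‖Q x‖ ^ p : ℝ) : ℂ) *
          (Q x * starRingEnd ℂ (ψ x))

noncomputable def mvalV (n : ℕ) (b c p ω α β : ℝ) (V : ESp n → ℝ) : ℝ :=
  sInf {s : ℝ | ∃ ψ : ESp n → ℂ, memW n b ψ ∧ ψ ≠ 0 ∧
    Integrable (fun x : ESp n => ‖x‖ ^ c * ‖ψ x‖ ^ (p+2)) ∧
    Integrable (fun x : ESp n => V x * ‖ψ x‖ ^ 2) ∧
    Integrable (fun x : ESp n => (fderiv ℝ V x x) * ‖ψ x‖ ^ 2) ∧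
    Kfun n b c p ω α β V ψ = 0 ∧ s = Sfun n b c p ω V ψ}

section Aux

open scoped Topology

lemma ae_add_right' {n : ℕ} {P : ESp n → Prop} (h : ∀ᵐ x : ESp n, P x) (a : ESp n) :
    ∀ᵐ x : ESp n, P (x + a) := by
  have h' : (Filter.map (fun x : ESp n => x + a) (ae volume)).Eventually P := by
    rwa [map_add_right_ae]
  exact Filter.eventually_map.mp h'

/-- A differentiable function on `ℝⁿ` (n ≥ 1) whose derivative vanishes a.e. and whose
square-norm is integrable is a.e. zero. -/
lemma ae_zero_of_fderiv_ae_zero {n : ℕ} (hn : 0 < n) (φ : ESp n → ℂ)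
    (hd : Differentiable ℝ φ)
    (h0 : ∀ᵐ x : ESp n, fderiv ℝ φ x = 0)
    (hint : Integrable (fun x : ESp n => ‖φ x‖ ^ (2:ℝ))) :
    ∀ᵐ x : ESp n, φ x = 0 := by
  haveI : Nonempty (Fin n) := ⟨⟨0, hn⟩⟩
  haveI : Nontrivial (ESp n) := by
    refine ⟨0, EuclideanSpace.single ⟨0, hn⟩ 1, fun h => ?_⟩
    have := congrArg (fun f : ESp n => f ⟨0, hn⟩) h
    simp at this
  -- step 1 : for every v, a.e. x, φ (x+v) = φ x
  have step1 : ∀ v : ESp n, ∀ᵐ x : ESp n, φ (x + v) = φ x := by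
    intro v
    have hmeasR : MeasurableSet {q : ℝ × ESp n | fderiv ℝ φ (q.2 + q.1 • v) = 0} := by
      have : Measurable fun q : ℝ × ESp n => fderiv ℝ φ (q.2 + q.1 • v) :=
        (measurable_fderiv ℝ φ).comp (measurable_snd.add (measurable_fst.smul_const v))
      exact this (measurableSet_singleton 0)
    have hmeasE : MeasurableSet {q : ESp n × ℝ | fderiv ℝ φ (q.1 + q.2 • v) = 0} := by
      have : Measurable fun q : ESp n × ℝ => fderiv ℝ φ (q.1 + q.2 • v) :=
        (measurable_fderiv ℝ φ).comp (measurable_fst.add (measurable_snd.smul_const v))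
      exact this (measurableSet_singleton 0)
    have hprod : ∀ᵐ q : ℝ × ESp n ∂((volume : Measure ℝ).prod volume),
        fderiv ℝ φ (q.2 + q.1 • v) = 0 := by
      rw [Measure.ae_prod_iff_ae_ae hmeasR]
      exact Eventually.of_forall fun t => ae_add_right' h0 (t • v)
    have hswap : ∀ᵐ q : ESp n × ℝ ∂((volume : Measure (ESp n)).prod volume),
        fderiv ℝ φ (q.1 + q.2 • v) = 0 := by
      rw [← Measure.prod_swap, ae_map_iff measurable_swap.aemeasurable hmeasE]
      exact hprod
    have hae := Measure.ae_ae_of_ae_prod hswap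
    filter_upwards [hae] with x hx
    have hderiv : ∀ t : ℝ, HasDerivAt (fun t : ℝ => φ (x + t • v))
        (fderiv ℝ φ (x + t • v) v) t := by
      intro t
      have h1 : HasDerivAt (fun t : ℝ => x + t • v) v t := by
        simpa using ((hasDerivAt_id t).smul_const v).const_add x
      exact (hd (x + t • v)).hasFDerivAt.comp_hasDerivAt t h1
    have hzero' : ∀ᵐ t : ℝ, fderiv ℝ φ (x + t • v) v = 0 := by
      filter_upwards [hx] with t ht; rw [ht]; rfl
    have hInt : IntervalIntegrable (fun t : ℝ => fderiv ℝ φ (x + t • v) v) volume 0 1 := by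
      constructor <;>
        exact (integrable_zero _ _ _).congr
          (ae_restrict_of_ae (hzero'.mono fun t ht => ht.symm))
    have hFTC := intervalIntegral.integral_eq_sub_of_hasDerivAt
      (f := fun t : ℝ => φ (x + t • v)) (fun t _ => hderiv t) hInt
    have hIz : (∫ t in (0:ℝ)..1, fderiv ℝ φ (x + t • v) v) = 0 := by
      rw [intervalIntegral.integral_congr_ae (g := fun _ => (0:ℂ))
        (hzero'.mono fun t ht _ => ht)]
      simp
    rw [hIz] at hFTC
    have : φ (x + (1:ℝ) • v) = φ (x + (0:ℝ) • v) := by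
      have h := hFTC.symm
      linear_combination h
    simpa using this
  -- step 2 : a.e. x, a.e. v, φ (x+v) = φ x
  have hφm : StronglyMeasurable φ := hd.continuous.stronglyMeasurable
  have hmeasR2 : MeasurableSet {q : ESp n × ESp n | φ (q.2 + q.1) = φ q.2} :=
    StronglyMeasurable.measurableSet_eq_fun
      (hφm.comp_measurable (measurable_snd.add measurable_fst))
      (hφm.comp_measurable measurable_snd)
  have hmeasE2 : MeasurableSet {q : ESp n × ESp n | φ (q.1 + q.2) = φ q.1} :=
    StronglyMeasurable.measurableSet_eq_fun
      (hφm.comp_measurable (measurable_fst.add measurable_snd))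
      (hφm.comp_measurable measurable_fst)
  have hprod2 : ∀ᵐ q : ESp n × ESp n ∂((volume : Measure (ESp n)).prod volume),
      φ (q.2 + q.1) = φ q.2 := by
    rw [Measure.ae_prod_iff_ae_ae hmeasR2]
    exact Eventually.of_forall fun v => step1 v
  have hswap2 : ∀ᵐ q : ESp n × ESp n ∂((volume : Measure (ESp n)).prod volume),
      φ (q.1 + q.2) = φ q.1 := by
    rw [← Measure.prod_swap, ae_map_iff measurable_swap.aemeasurable hmeasE2]
    exact hprod2
  have hae2 := Measure.ae_ae_of_ae_prod hswap2
  have hμ0 : (volume : Measure (ESp n)) ≠ 0 := by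
    intro h
    have := measure_univ_of_isAddLeftInvariant (volume : Measure (ESp n))
    rw [h] at this
    simp at this
  haveI : (ae (volume : Measure (ESp n))).NeBot := ae_neBot.mpr hμ0
  obtain ⟨x₀, hx₀⟩ := hae2.exists
  have hconst : ∀ᵐ y : ESp n, φ y = φ x₀ := by
    rw [← map_add_left_ae (volume : Measure (ESp n)) x₀]
    exact Filter.eventually_map.mpr hx₀
  have hc : φ x₀ = 0 := by
    have hI : Integrable (fun _ : ESp n => ‖φ x₀‖ ^ (2:ℝ)) volume :=
      hint.congr (hconst.mono fun y hy => by simp only []; rw [hy])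
    rcases integrable_const_iff.mp hI with h | h
    · have h2 : ‖φ x₀‖ = 0 := by
        by_contra hne
        have : (0:ℝ) < ‖φ x₀‖ := lt_of_le_of_ne (norm_nonneg _) (Ne.symm hne)
        exact absurd h (by positivity)
      simpa using h2
    · exfalso
      have hinf := measure_univ_of_isAddLeftInvariant (volume : Measure (ESp n))
      exact @measure_ne_top _ _ volume h Set.univ hinf
  filter_upwards [hconst] with y hy
  rw [hy, hc]

lemma wInt_const_smul (n : ℕ) (a q s : ℝ) (hs : 0 ≤ s) (f : ESp n → ℂ) :
    wInt n a q (fun x => s • f x) = s ^ q * wInt n a q f := by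
  unfold wInt
  rw [← integral_const_mul]
  congr 1; funext x
  simp only [norm_smul, Real.norm_eq_abs, abs_of_nonneg hs]
  rw [Real.mul_rpow hs (norm_nonneg _)]
  ring

lemma gradInt_const_smul (n : ℕ) (b s : ℝ) (hs : 0 ≤ s) (f : ESp n → ℂ)
    (hf : Differentiable ℝ f) :
    gradInt n b (fun x => s • f x) = s ^ (2:ℕ) * gradInt n b f := by
  unfold gradInt
  rw [← integral_const_mul]
  congr 1; funext x
  rw [show (fderiv ℝ (fun x => s • f x) x) = s • fderiv ℝ f x from
      fderiv_const_smul (hf x) s]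
  rw [norm_smul s (fderiv ℝ f x)]
  simp only [Real.norm_eq_abs, abs_of_nonneg hs, mul_pow]
  ring

lemma wInt_nonneg (n : ℕ) (a q : ℝ) (f : ESp n → ℂ) : 0 ≤ wInt n a q f :=
  integral_nonneg fun x => by positivity

lemma gradInt_nonneg (n : ℕ) (b : ℝ) (f : ESp n → ℂ) : 0 ≤ gradInt n b f :=
  integral_nonneg fun x => by positivity

lemma Vterm_zero (n : ℕ) (f : ESp n → ℂ) : Vterm n (fun _ => 0) f = 0 := by
  simp [Vterm]

lemma VdV_zero (n : ℕ) (f : ESp n → ℂ) : VdV n (fun _ => (0:ℝ)) f = 0 := by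
  simp [VdV]

lemma final_ineq (e βv μ κ u ω G M P Vt Wd σ t : ℝ)
    (he : 0 < e) (hβ : 0 < βv) (hμ : 0 < μ) (hu : 0 ≤ u) (hω : 0 < ω) (hκμ : μ ≤ κ)
    (hG : 0 ≤ G) (hM : 0 ≤ M) (hP : 0 ≤ P)
    (hComb : 0 ≤ e * Vt + Wd)
    (hσ0 : 0 ≤ σ) (hσ1 : σ ≤ 1) (ht0 : 0 ≤ t) (ht1 : t ≤ 1)
    (htX : t * ((κ*u) * P) = (μ/2)*G + ((μ - e*βv)/2)*(ω*M)) :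
    μ*((1/2)*(σ*G) + (ω/2)*(σ*M) - u*((t*σ)*P)) ≤
      μ*((1/2)*G + (1/2)*Vt + (ω/2)*M - u*P)
      - ((μ/2)*G + ((μ - e*βv)/2)*(Vt + ω*M) - (βv/2)*Wd - (κ*u)*P) := by
  have key : μ*((1/2)*G + (1/2)*Vt + (ω/2)*M - u*P)
      - ((μ/2)*G + ((μ - e*βv)/2)*(Vt + ω*M) - (βv/2)*Wd - (κ*u)*P)
      - μ*((1/2)*(σ*G) + (ω/2)*(σ*M) - u*((t*σ)*P))
      = (βv/2)*(e*Vt + Wd) + ((e*βv)/2)*((1-σ)*(ω*M))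
        + (1-σ*t)*((κ-μ)*(u*P)) := by
    linear_combination σ * htX
  have hσt : σ * t ≤ 1 := mul_le_one₀ hσ1 ht0 ht1
  have h5 : 0 ≤ (1-σ*t)*((κ-μ)*(u*P)) := by
    apply mul_nonneg (by linarith)
    exact mul_nonneg (by linarith) (mul_nonneg hu hP)
  have h6 : 0 ≤ ((e*βv)/2)*((1-σ)*(ω*M)) := by
    apply mul_nonneg (by positivity)
    exact mul_nonneg (by linarith) (by positivity)
  have h7 : 0 ≤ (βv/2)*(e*Vt + Wd) := mul_nonneg (by positivity) hComb
  linarith [key, h5, h6, h7]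

lemma elem_nonneg (μ' B κ' q ω g m' pp r : ℝ)
    (hω : 0 < ω) (hκ : 0 < κ') (hκμ : μ' ≤ κ') (hκB : 2*B ≤ κ')
    (hg : 0 ≤ g) (hm : 0 ≤ m')
    (hK : (μ'/2)*g + B*(ω*m') = (κ'/q)*pp)
    (hr : r = (1/2)*g + (ω/2)*m' - (1/q)*pp) :
    0 ≤ r := by
  have key : 2*κ'*r = (κ'-μ')*g + (κ'-2*B)*(ω*m') := by
    rw [hr]; linear_combination 2*hK
  nlinarith [key, mul_nonneg (by linarith : (0:ℝ) ≤ κ'-μ') hg,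
    mul_nonneg (by linarith : (0:ℝ) ≤ κ'-2*B) (by positivity : (0:ℝ) ≤ ω*m')]

end Aux

set_option maxHeartbeats 2000000 in
/-- uniform negativity of `K^{α,β}_{ω,V}` below the level `m^{α,β}_{ω,0}`. -/
theorem K_uniformly_negative
    (n : ℕ) (hn : 3 ≤ n) (b c p ω α β : ℝ)
    (hb1 : 2 - (n:ℝ) < b) (hb2 : b < 2)
    (hc1 : b - 2 < c) (hc2 : c ≤ 0)
    (hω : 0 < ω) (hp : 0 < p)
    (hpc1 : 2*(2-b) < (n:ℝ)*p - 2*c) (hpc2 : (n:ℝ)*p - 2*c ≤ (2-b)*(p+2))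
    (hα : 0 < α) (hβ : 0 < β) (hαβ : 0 ≤ 2*α - (n:ℝ)*β)
    (V : ESp n → ℝ)
    (hVdiff : Differentiable ℝ V) (hVdiff2 : Differentiable ℝ (fderiv ℝ V))
    (hVpos : ∀ x, 0 ≤ V x)
    (hVlow : ∀ x, -(2-b) * V x ≤ fderiv ℝ V x x)
    (hVup : ∀ x, fderiv ℝ V x x ≤ 0)
    (hHess : ∀ x : ESp n,
      fderiv ℝ (fderiv ℝ V) x x x ≤ -((n:ℝ) + 3 - b - 2*α/β) * fderiv ℝ V x x) :
    ∀ φ : ESp n → ℂ, memW n b φ →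
      Integrable (fun x : ESp n => ‖x‖ ^ c * ‖φ x‖ ^ (p+2)) →
      Integrable (fun x : ESp n => V x * ‖φ x‖ ^ 2) →
      Integrable (fun x : ESp n => (fderiv ℝ V x x) * ‖φ x‖ ^ 2) →
      Sfun n b c p ω V φ < mvalV n b c p ω α β (fun _ => 0) →
      Kfun n b c p ω α β V φ < 0 →
      Kfun n b c p ω α β V φ ≤
        -(2*α + (2-b-(n:ℝ))*β) *
          (mvalV n b c p ω α β (fun _ => 0) - Sfun n b c p ω V φ) := by
  
  intro φ hmem hIntP hIntV hIntW hS hK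
  obtain ⟨hdiff, hIntM, hIntG⟩ := hmem
  have hn3 : (3:ℝ) ≤ (n:ℝ) := by exact_mod_cast hn
  have h2b : (0:ℝ) < 2 - b := by linarith
  have hq : (0:ℝ) < p + 2 := by linarith
  have hμ : (0:ℝ) < 2*α + (2-b-(n:ℝ))*β := by nlinarith [mul_pos h2b hβ]
  have hκ : (0:ℝ) < α*(p+2) - ((n:ℝ)+c)*β := by
    nlinarith [mul_nonneg hαβ hq.le,
      mul_pos hβ (show (0:ℝ) < (n:ℝ)*p - 2*c by linarith)]
  have hκμ : 2*α + (2-b-(n:ℝ))*β ≤ α*(p+2) - ((n:ℝ)+c)*β := by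
    nlinarith [mul_nonneg hαβ hp.le,
      mul_nonneg hβ.le (show (0:ℝ) ≤ (n:ℝ)*p - 2*c - 2*(2-b) by linarith)]
  have hκB : 2*α - (n:ℝ)*β ≤ α*(p+2) - ((n:ℝ)+c)*β := by
    nlinarith [mul_pos hα hp, mul_nonneg (neg_nonneg.2 hc2) hβ.le]
  have hG : 0 ≤ gradInt n b φ := gradInt_nonneg n b φ
  have hM : 0 ≤ wInt n 0 2 φ := wInt_nonneg n 0 2 φ
  have hP : 0 ≤ wInt n c (p+2) φ := wInt_nonneg n c (p+2) φ
  have hVt : 0 ≤ Vterm n V φ :=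
    integral_nonneg fun x => mul_nonneg (hVpos x) (by positivity)
  have hWd : VdV n V φ ≤ 0 :=
    integral_nonpos fun x => mul_nonpos_iff.mpr (Or.inr ⟨hVup x, by positivity⟩)
  have hComb : 0 ≤ (2-b) * Vterm n V φ + VdV n V φ := by
    have h1 : (2-b) * Vterm n V φ + VdV n V φ
        = ∫ x : ESp n, ((2-b) * (V x * ‖φ x‖^2) + fderiv ℝ V x x * ‖φ x‖^2) := by
      unfold Vterm VdV
      rw [integral_add (hIntV.const_mul _) hIntW, integral_const_mul]
    rw [h1]
    refine integral_nonneg fun x => ?_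
    have h := hVlow x
    have h2 : (2-b) * (V x * ‖φ x‖^2) + fderiv ℝ V x x * ‖φ x‖^2
        = ((2-b) * V x + fderiv ℝ V x x) * ‖φ x‖^2 := by ring
    rw [h2]
    exact mul_nonneg (by linarith) (by positivity)
  -- bounded below : every element of the constraint set is nonnegative
  have hbdd : BddBelow {r : ℝ | ∃ ψ : ESp n → ℂ, memW n b ψ ∧ ψ ≠ 0 ∧
      Integrable (fun x : ESp n => ‖x‖ ^ c * ‖ψ x‖ ^ (p+2)) ∧
      Integrable (fun x : ESp n => (fun _ : ESp n => (0:ℝ)) x * ‖ψ x‖ ^ 2) ∧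
      Integrable (fun x : ESp n => (fderiv ℝ (fun _ : ESp n => (0:ℝ)) x x) * ‖ψ x‖ ^ 2) ∧
      Kfun n b c p ω α β (fun _ => 0) ψ = 0 ∧ r = Sfun n b c p ω (fun _ => 0) ψ} := by
    refine ⟨0, fun r hr => ?_⟩
    obtain ⟨ψ', _, _, _, _, _, hK', hr'⟩ := hr
    have hK'' : ((2*α + (2-b-(n:ℝ))*β)/2) * gradInt n b ψ'
        + ((2*α - (n:ℝ)*β)/2) * (ω * wInt n 0 2 ψ')
        = ((α*(p+2) - ((n:ℝ)+c)*β)/(p+2)) * wInt n c (p+2) ψ' := by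
      simp only [Kfun, Vterm_zero, VdV_zero] at hK'
      linarith
    have hr'' : r = (1/2) * gradInt n b ψ' + (ω/2) * wInt n 0 2 ψ'
        - (1/(p+2)) * wInt n c (p+2) ψ' := by
      simp only [Sfun, Vterm_zero] at hr'
      linarith
    exact elem_nonneg (2*α + (2-b-(n:ℝ))*β) ((2*α - (n:ℝ)*β)/2)
      (α*(p+2) - ((n:ℝ)+c)*β) (p+2) ω (gradInt n b ψ') (wInt n 0 2 ψ')
      (wInt n c (p+2) ψ') r hω hκ hκμ (by linarith)
      (gradInt_nonneg n b ψ') (wInt_nonneg n 0 2 ψ') hK'' hr''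
  -- X < Y
  have hXY : ((2*α + (2-b-(n:ℝ))*β)/2) * gradInt n b φ
      + ((2*α - (n:ℝ)*β)/2) * (ω * wInt n 0 2 φ)
      < ((α*(p+2) - ((n:ℝ)+c)*β)/(p+2)) * wInt n c (p+2) φ := by
    simp only [Kfun] at hK
    have hBVt : 0 ≤ ((2*α - (n:ℝ)*β)/2) * Vterm n V φ :=
      mul_nonneg (by linarith) hVt
    have hbW : 0 ≤ (β/2) * (- VdV n V φ) :=
      mul_nonneg (by positivity) (by linarith)
    linarith [hBVt, hbW]
  have hX0 : 0 ≤ ((2*α + (2-b-(n:ℝ))*β)/2) * gradInt n b φ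
      + ((2*α - (n:ℝ)*β)/2) * (ω * wInt n 0 2 φ) :=
    add_nonneg (mul_nonneg (by linarith) hG)
      (mul_nonneg (by linarith) (mul_nonneg hω.le hM))
  have hPpos : 0 < wInt n c (p+2) φ := by
    by_contra hcon
    push_neg at hcon
    have hP0 : wInt n c (p+2) φ = 0 := le_antisymm hcon hP
    rw [hP0, mul_zero] at hXY
    linarith
  have hYpos : 0 < ((α*(p+2) - ((n:ℝ)+c)*β)/(p+2)) * wInt n c (p+2) φ :=
    mul_pos (div_pos hκ hq) hPpos
  rcases eq_or_lt_of_le hX0 with hXz | hXpos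
  · -- degenerate case : gradient term vanishes, contradiction
    exfalso
    have hGz : gradInt n b φ = 0 := by
      by_contra hne
      have hGpos : 0 < gradInt n b φ := lt_of_le_of_ne hG (Ne.symm hne)
      nlinarith [mul_pos (show (0:ℝ) < (2*α + (2-b-(n:ℝ))*β)/2 by linarith) hGpos,
        mul_nonneg (show (0:ℝ) ≤ (2*α - (n:ℝ)*β)/2 by linarith)
          (mul_nonneg hω.le hM)]
    haveI : Nonempty (Fin n) := ⟨⟨0, by omega⟩⟩
    haveI : Nontrivial (ESp n) := by
      refine ⟨0, EuclideanSpace.single ⟨0, by omega⟩ 1, fun h => ?_⟩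
      have := congrArg (fun f : ESp n => f ⟨0, by omega⟩) h
      simp at this
    have hae0 : (fun x : ESp n => ‖x‖^b * ‖fderiv ℝ φ x‖^2) =ᵐ[volume] 0 :=
      (integral_eq_zero_iff_of_nonneg (fun x => by positivity) hIntG).mp hGz
    have hfd : ∀ᵐ x : ESp n, fderiv ℝ φ x = 0 := by
      have hne0 : ∀ᵐ x : ESp n, x ≠ (0 : ESp n) := by
        refine (ae_iff).mpr ?_
        simp only [ne_eq, not_not, Set.setOf_eq_eq_singleton]
        exact measure_singleton 0
      filter_upwards [hae0, hne0] with x hx hxne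
      simp only [Pi.zero_apply] at hx
      rcases mul_eq_zero.mp hx with h | h
      · exact absurd h (ne_of_gt (Real.rpow_pos_of_pos (norm_pos_iff.mpr hxne) b))
      · have h2 : ‖fderiv ℝ φ x‖ = 0 := by
          have := pow_eq_zero_iff (n := 2) (by norm_num) |>.mp h
          exact this
        exact norm_eq_zero.mp h2
    have hφ0 := ae_zero_of_fderiv_ae_zero (by omega) φ hdiff hfd hIntM
    have hPz : wInt n c (p+2) φ = 0 := by
      unfold wInt
      rw [integral_eq_zero_of_ae ?_]
      filter_upwards [hφ0] with x hx
      rw [hx]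
      simp [Real.zero_rpow (ne_of_gt hq)]
    linarith
  · -- main case
    obtain ⟨t, ht0, ht1, htX⟩ : ∃ t : ℝ, 0 < t ∧ t ≤ 1 ∧
        t * (((α*(p+2) - ((n:ℝ)+c)*β)/(p+2)) * wInt n c (p+2) φ)
        = ((2*α + (2-b-(n:ℝ))*β)/2) * gradInt n b φ
          + ((2*α - (n:ℝ)*β)/2) * (ω * wInt n 0 2 φ) := by
      refine ⟨(((2*α + (2-b-(n:ℝ))*β)/2) * gradInt n b φ
          + ((2*α - (n:ℝ)*β)/2) * (ω * wInt n 0 2 φ))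
          / (((α*(p+2) - ((n:ℝ)+c)*β)/(p+2)) * wInt n c (p+2) φ),
        div_pos hXpos hYpos, ?_, div_mul_cancel₀ _ (ne_of_gt hYpos)⟩
      rw [div_le_one hYpos]
      linarith
    obtain ⟨s, hs0, hs1, hsp⟩ : ∃ s : ℝ, 0 < s ∧ s ≤ 1 ∧ s ^ p = t := by
      refine ⟨t ^ (1/p), Real.rpow_pos_of_pos ht0 _,
        Real.rpow_le_one ht0.le ht1 (by positivity), ?_⟩
      rw [← Real.rpow_mul ht0.le, one_div_mul_cancel (ne_of_gt hp), Real.rpow_one]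
    have hσ0 : (0:ℝ) ≤ s^(2:ℕ) := by positivity
    have hσ1 : s^(2:ℕ) ≤ 1 := pow_le_one₀ hs0.le hs1
    have hs2 : s ^ (2:ℝ) = s^(2:ℕ) := by
      rw [show (2:ℝ) = ((2:ℕ):ℝ) by norm_num, Real.rpow_natCast]
    have hsp2 : s ^ (p+2) = t * s^(2:ℕ) := by
      rw [Real.rpow_add hs0, hsp, hs2]
    have hnorm : ∀ (q : ℝ) (x : ESp n), ‖s • φ x‖ ^ q = s ^ q * ‖φ x‖ ^ q := by
      intro q x
      rw [norm_smul, Real.norm_eq_abs, abs_of_nonneg hs0.le,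
        Real.mul_rpow hs0.le (norm_nonneg _)]
    have hgrad : gradInt n b (fun x => s • φ x) = s^(2:ℕ) * gradInt n b φ :=
      gradInt_const_smul n b s hs0.le φ hdiff
    have hM2 : wInt n 0 2 (fun x => s • φ x) = s^(2:ℝ) * wInt n 0 2 φ :=
      wInt_const_smul n 0 2 s hs0.le φ
    have hP2 : wInt n c (p+2) (fun x => s • φ x) = s^(p+2) * wInt n c (p+2) φ :=
      wInt_const_smul n c (p+2) s hs0.le φ
    have hdiffψ : Differentiable ℝ (fun x => s • φ x) := hdiff.const_smul s
    have intM2 : Integrable (fun x : ESp n => ‖s • φ x‖ ^ (2:ℝ)) :=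
      (hIntM.const_mul (s^(2:ℝ))).congr
        (Eventually.of_forall fun x => (hnorm 2 x).symm)
    have intG2 : Integrable
        (fun x : ESp n => ‖x‖^b * ‖fderiv ℝ (fun x => s • φ x) x‖^2) := by
      refine (hIntG.const_mul (s^(2:ℕ))).congr (Eventually.of_forall fun x => ?_)
      show s^(2:ℕ) * (‖x‖^b * ‖fderiv ℝ φ x‖^2) = ‖x‖^b * ‖fderiv ℝ (fun x => s • φ x) x‖^2
      rw [show fderiv ℝ (fun x => s • φ x) x = s • fderiv ℝ φ x from
          fderiv_const_smul (hdiff x) s, norm_smul s (fderiv ℝ φ x)]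
      simp only [Real.norm_eq_abs, abs_of_nonneg hs0.le, mul_pow]
      ring
    have intP2 : Integrable (fun x : ESp n => ‖x‖^c * ‖s • φ x‖^(p+2)) := by
      refine (hIntP.const_mul (s^(p+2))).congr (Eventually.of_forall fun x => ?_)
      show s^(p+2) * (‖x‖^c * ‖φ x‖^(p+2)) = ‖x‖^c * ‖s • φ x‖^(p+2)
      rw [hnorm (p+2) x]
      ring
    have intV2 : Integrable
        (fun x : ESp n => (fun _ : ESp n => (0:ℝ)) x * ‖s • φ x‖ ^ 2) :=
      (integrable_zero _ _ _).congr (Eventually.of_forall fun x => by simp)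
    have intW2 : Integrable
        (fun x : ESp n => (fderiv ℝ (fun _ : ESp n => (0:ℝ)) x x) * ‖s • φ x‖ ^ 2) :=
      (integrable_zero _ _ _).congr (Eventually.of_forall fun x => by simp)
    have hφne : ∃ x, φ x ≠ 0 := by
      by_contra hnone
      push_neg at hnone
      have hPz : wInt n c (p+2) φ = 0 := by
        unfold wInt
        have h3 : ∀ x : ESp n, ‖x‖^c * ‖φ x‖^(p+2) = 0 := fun x => by
          rw [hnone x]; simp [Real.zero_rpow (ne_of_gt hq)]
        simp only [h3, integral_zero]
      linarith
    have hne : (fun x => s • φ x) ≠ 0 := by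
      obtain ⟨x₀, hx₀⟩ := hφne
      intro h
      have h2 := congrFun h x₀
      simp only [Pi.zero_apply] at h2
      rcases smul_eq_zero.mp h2 with h' | h'
      · exact absurd h' (ne_of_gt hs0)
      · exact hx₀ h'
    have hKψ : Kfun n b c p ω α β (fun _ => 0) (fun x => s • φ x) = 0 := by
      simp only [Kfun, Vterm_zero, VdV_zero, hgrad, hM2, hP2, hs2, hsp2]
      linear_combination (-(s^(2:ℕ))) * htX
    have hSψ : Sfun n b c p ω (fun _ => 0) (fun x => s • φ x)
        = (1/2)*(s^(2:ℕ) * gradInt n b φ) + (ω/2)*(s^(2:ℕ) * wInt n 0 2 φ)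
          - (1/(p+2))*((t*s^(2:ℕ)) * wInt n c (p+2) φ) := by
      simp only [Sfun, Vterm_zero, hgrad, hM2, hP2, hs2, hsp2]
      ring
    have hsinf : mvalV n b c p ω α β (fun _ => 0)
        ≤ Sfun n b c p ω (fun _ => 0) (fun x => s • φ x) := by
      unfold mvalV
      exact csInf_le hbdd
        ⟨fun x => s • φ x, ⟨hdiffψ, intM2, intG2⟩, hne, intP2, intV2, intW2, hKψ, rfl⟩
    have hfinal := final_ineq (2-b) β (2*α + (2-b-(n:ℝ))*β)
      (α*(p+2) - ((n:ℝ)+c)*β) (1/(p+2)) ω (gradInt n b φ) (wInt n 0 2 φ)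
      (wInt n c (p+2) φ) (Vterm n V φ) (VdV n V φ) (s^(2:ℕ)) t
      h2b hβ hμ (by positivity) hω hκμ hG hM hP hComb hσ0 hσ1 ht0.le ht1
      (by linear_combination htX)
    have hSeq : Sfun n b c p ω V φ
        = (1/2)*gradInt n b φ + (1/2)*Vterm n V φ + (ω/2)*wInt n 0 2 φ
          - (1/(p+2))*wInt n c (p+2) φ := by
      simp only [Sfun]
    have hKeq : Kfun n b c p ω α β V φ
        = ((2*α + (2-b-(n:ℝ))*β)/2) * gradInt n b φ
          + ((2*α - (n:ℝ)*β)/2) * (Vterm n V φ + ω * wInt n 0 2 φ)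
          - (β/2) * VdV n V φ
          - ((α*(p+2) - ((n:ℝ)+c)*β)/(p+2)) * wInt n c (p+2) φ := by
      simp only [Kfun]
    have hc1 : (2*α + (2-b-(n:ℝ))*β) * mvalV n b c p ω α β (fun _ => 0)
        ≤ (2*α + (2-b-(n:ℝ))*β) *
          ((1/2)*(s^(2:ℕ) * gradInt n b φ) + (ω/2)*(s^(2:ℕ) * wInt n 0 2 φ)
            - (1/(p+2))*((t*s^(2:ℕ)) * wInt n c (p+2) φ)) := by
      rw [← hSψ]
      exact mul_le_mul_of_nonneg_left hsinf hμ.le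
    rw [hKeq, hSeq]
    ring_nf at hc1 hfinal ⊢
    linarith [hc1, hfinal]
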